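/- Let M be a matroid on a finite set E with rank function r, and let F, L ⊆ E. There exists a base B of M with |B ∩ F| = r(F) and |B ∩ L| = r(L) if and only if {F, L} is a modular pair, i.e., r(F ∪ L) + r(F ∩ L) = r(F) + r(L). -/

import Mathlib

open Finset

/-- A (finite) matroid on a finite ground set `E`, given by a submodular rank function,
following the matroid rank axioms (R1)-(R3). -/
structure FinMatroid (α : Type*) [DecidableEq α] where
  E : Finset α
  r : Finset α → ℕ
  r_le_card : ∀ ⦃A : Finset α⦄, A ⊆ E → r A ≤ A.card
  r_mono : ∀ ⦃A B : Finset α⦄, A ⊆ B → B ⊆ E → r A ≤ r B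
  r_submod : ∀ ⦃A B : Finset α⦄, A ⊆ E → B ⊆ E → r (A ∪ B) + r (A ∩ B) ≤ r A + r B

namespace FinMatroid

variable {α : Type*} [DecidableEq α]

/-- A set is independent if it is a subset of the ground set whose rank is its cardinality. -/
def Indep (M : FinMatroid α) (A : Finset α) : Prop :=
  A ⊆ M.E ∧ M.r A = A.card

/-- A base is a maximal independent set. -/
def Base (M : FinMatroid α) (B : Finset α) : Prop :=
  M.Indep B ∧ ∀ ⦃A : Finset α⦄, M.Indep A → B ⊆ A → A = B

/-- A basis of `A` is a maximal independent subset of `A`. -/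
def BasisOf (M : FinMatroid α) (I A : Finset α) : Prop :=
  I ⊆ A ∧ M.Indep I ∧ ∀ ⦃J : Finset α⦄, J ⊆ A → M.Indep J → I ⊆ J → J = I

/-- A flat is a set `F` with `F = {s ∈ E : r (F ∪ {s}) = r F}`. -/
def Flat (M : FinMatroid α) (F : Finset α) : Prop :=
  F = M.E.filter (fun s => M.r (F ∪ {s}) = M.r F)

/-- A matroid is loopless if every singleton of the ground set has rank one. -/
def Loopless (M : FinMatroid α) : Prop :=
  ∀ s ∈ M.E, M.r {s} = 1

/-- The restriction `M|A` of `M` to `A`. -/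
def restrict (M : FinMatroid α) (A : Finset α) : FinMatroid α where
  E := A ∩ M.E
  r := M.r
  r_le_card := fun _ h => M.r_le_card (h.trans inter_subset_right)
  r_mono := fun _ _ h h' => M.r_mono h (h'.trans inter_subset_right)
  r_submod := fun _ _ h h' =>
    M.r_submod (h.trans inter_subset_right) (h'.trans inter_subset_right)

/-- The contraction `M/C` of `C` in `M`, with rank function `A ↦ r (A ∪ C) - r C`. -/
def contract (M : FinMatroid α) (C : Finset α) : FinMatroid α where
  E := M.E \ C
  r := fun A => M.r (A ∪ C ∩ M.E) - M.r (C ∩ M.E)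
  r_le_card := by
    intro A hA
    have hAE : A ⊆ M.E := hA.trans sdiff_subset
    have hc : C ∩ M.E ⊆ M.E := inter_subset_right
    have h1 := M.r_submod hAE hc
    have h2 := M.r_le_card hAE
    beta_reduce
    omega
  r_mono := by
    intro A B hAB hB
    have hBE : B ⊆ M.E := hB.trans sdiff_subset
    have hc : C ∩ M.E ⊆ M.E := inter_subset_right
    have h1 : M.r (A ∪ C ∩ M.E) ≤ M.r (B ∪ C ∩ M.E) :=
      M.r_mono (union_subset_union hAB (Finset.Subset.refl _)) (union_subset hBE hc)
    beta_reduce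
    omega
  r_submod := by
    intro A B hA hB
    have hAE : A ⊆ M.E := hA.trans sdiff_subset
    have hBE : B ⊆ M.E := hB.trans sdiff_subset
    have hc : C ∩ M.E ⊆ M.E := inter_subset_right
    have hAc : A ∪ C ∩ M.E ⊆ M.E := union_subset hAE hc
    have hBc : B ∪ C ∩ M.E ⊆ M.E := union_subset hBE hc
    have h1 := M.r_submod hAc hBc
    have e1 : (A ∪ C ∩ M.E) ∪ (B ∪ C ∩ M.E) = (A ∪ B) ∪ C ∩ M.E := by
      ext x; simp only [Finset.mem_union, Finset.mem_inter]; tauto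
    have e2 : (A ∪ C ∩ M.E) ∩ (B ∪ C ∩ M.E) = (A ∩ B) ∪ C ∩ M.E := by
      ext x; simp only [Finset.mem_union, Finset.mem_inter]; tauto
    rw [e1, e2] at h1
    have hABc : (A ∩ B) ∪ C ∩ M.E ⊆ M.E := union_subset (inter_subset_left.trans hAE) hc
    have hABc' : (A ∪ B) ∪ C ∩ M.E ⊆ M.E := union_subset (union_subset hAE hBE) hc
    have h2 : M.r (C ∩ M.E) ≤ M.r ((A ∩ B) ∪ C ∩ M.E) := M.r_mono subset_union_right hABc
    have h3 : M.r (C ∩ M.E) ≤ M.r (A ∪ C ∩ M.E) := M.r_mono subset_union_right hAc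
    have h4 : M.r (C ∩ M.E) ≤ M.r (B ∪ C ∩ M.E) := M.r_mono subset_union_right hBc
    have h5 : M.r (C ∩ M.E) ≤ M.r ((A ∪ B) ∪ C ∩ M.E) := M.r_mono subset_union_right hABc'
    beta_reduce
    omega

/-- `A` is a separator of `M` if `r A + r (E \ A) = r E`. -/
def Separator (M : FinMatroid α) (A : Finset α) : Prop :=
  A ⊆ M.E ∧ M.r A + M.r (M.E \ A) = M.r M.E

/-- `M` is connected (inseparable) if its ground set is nonempty and its only
separators are `∅` and `E`. -/
def Connected (M : FinMatroid α) : Prop :=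
  M.E.Nonempty ∧ ∀ A : Finset α, M.Separator A → A = ∅ ∨ A = M.E

/-- For connected `M`, a set `∅ ≠ F ⊊ E` is non-degenerate if both `M|F` and `M/F`
are connected. -/
def Nondegenerate (M : FinMatroid α) (F : Finset α) : Prop :=
  F ≠ ∅ ∧ F ⊂ M.E ∧ (M.restrict F).Connected ∧ (M.contract F).Connected

end FinMatroid

noncomputable section

open FinMatroid

/-- The indicator (incidence) vector `1^A ∈ ℝ^α` of a finite set `A`. -/
def indicatorVec {α : Type*} [DecidableEq α] (A : Finset α) : α → ℝ :=
  fun i => if i ∈ A then 1 else 0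

/-- The base polytope of a matroid: the convex hull of the indicator vectors of its bases. -/
def basePolytope {α : Type*} [DecidableEq α] (M : FinMatroid α) : Set (α → ℝ) :=
  convexHull ℝ {x | ∃ B : Finset α, M.Base B ∧ x = indicatorVec B}

/-- `Q` is a face of `P`: either `∅`, or `P` itself, or the subset of `P` where some
linear functional attains its maximum over `P` (an exposed face). -/
def IsFaceOf {α : Type*} (P Q : Set (α → ℝ)) : Prop :=
  Q = ∅ ∨ Q = P ∨ ∃ ℓ : (α → ℝ) →ₗ[ℝ] ℝ, Q = {x ∈ P | ∀ y ∈ P, ℓ y ≤ ℓ x}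

/-- The dimension of a convex set: the dimension of the direction of its affine span. -/
def sdim {α : Type*} (Q : Set (α → ℝ)) : ℕ :=
  Module.finrank ℝ (affineSpan ℝ Q).direction

end

namespace FinMatroid

variable {α : Type*} [DecidableEq α] {M : FinMatroid α} {B I J A S X F L : Finset α}

theorem r_empty (M : FinMatroid α) : M.r ∅ = 0 :=
  Nat.le_zero.mp (M.r_le_card (empty_subset _))

theorem indep_empty (M : FinMatroid α) : M.Indep ∅ :=
  ⟨empty_subset _, M.r_empty⟩

theorem Indep.card_le_r (hI : M.Indep I) (hIX : I ⊆ X) (hX : X ⊆ M.E) : I.card ≤ M.r X :=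
  hI.2 ▸ M.r_mono hIX hX

-- Submodularity on `I` and `J \ I` gives `r J ≤ r I + |J \ I|`.
theorem Indep.subset (hJ : M.Indep J) (hIJ : I ⊆ J) : M.Indep I := by
  have hIE : I ⊆ M.E := hIJ.trans hJ.1
  have hDE : J \ I ⊆ M.E := sdiff_subset.trans hJ.1
  refine ⟨hIE, le_antisymm (M.r_le_card hIE) ?_⟩
  have hsub := M.r_submod hIE hDE
  rw [union_sdiff_of_subset hIJ, inter_sdiff_self, hJ.2] at hsub
  have hD := M.r_le_card hDE
  have hcard := card_sdiff_add_card_eq_card hIJ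
  omega

theorem Indep.card_inter_le_r (hI : M.Indep I) (hX : X ⊆ M.E) : (I ∩ X).card ≤ M.r X :=
  (hI.subset inter_subset_left).card_le_r inter_subset_right hX

theorem r_union_eq_of_forall_r_insert_eq (hA : A ⊆ M.E) (hS : S ⊆ M.E)
    (h : ∀ x ∈ S, M.r (insert x A) = M.r A) : M.r (A ∪ S) = M.r A := by
  induction S using Finset.induction_on with
  | empty => rw [union_empty]
  | @insert a S _ ih =>
    have hSE : S ⊆ M.E := (subset_insert a S).trans hS
    have haE : a ∈ M.E := hS (mem_insert_self a S)
    have hAS : M.r (A ∪ S) = M.r A := ih hSE fun x hx => h x (mem_insert_of_mem hx)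
    have haA : M.r (insert a A) = M.r A := h a (mem_insert_self a S)
    have hsub := M.r_submod (union_subset hA hSE) (insert_subset haE hA)
    rw [show A ∪ S ∪ insert a A = A ∪ insert a S by grind] at hsub
    have hinter : M.r A ≤ M.r ((A ∪ S) ∩ insert a A) :=
      M.r_mono (subset_inter subset_union_left (subset_insert a A))
        (inter_subset_left.trans (union_subset hA hSE))
    have hmono : M.r A ≤ M.r (A ∪ insert a S) :=
      M.r_mono subset_union_left (union_subset hA (insert_subset haE hSE))
    omega

-- Otherwise every element of `A \ I` lies in the span of `I`, forcing `r A = r I = |I|`.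
theorem Indep.exists_insert_of_card_lt_r (hI : M.Indep I) (hIA : I ⊆ A) (hA : A ⊆ M.E)
    (hlt : I.card < M.r A) : ∃ x ∈ A \ I, M.Indep (insert x I) := by
  by_contra! hdep
  have hspan : ∀ x ∈ A \ I, M.r (insert x I) = M.r I := by
    intro x hx
    obtain ⟨hxA, hxI⟩ := mem_sdiff.mp hx
    have hxIE : insert x I ⊆ M.E := insert_subset (hA hxA) hI.1
    have hne : M.r (insert x I) ≠ (insert x I).card := fun h => hdep x hx ⟨hxIE, h⟩
    have hle := M.r_le_card hxIE
    have hge := M.r_mono (subset_insert x I) hxIE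
    rw [card_insert_of_notMem hxI] at hne hle
    have := hI.2
    omega
  have := r_union_eq_of_forall_r_insert_eq hI.1 (sdiff_subset.trans hA) hspan
  rw [union_sdiff_of_subset hIA, hI.2] at this
  omega

theorem Indep.exists_superset_card_eq_r {I A : Finset α} (hI : M.Indep I) (hIA : I ⊆ A) (hA : A ⊆ M.E) :
    ∃ J, I ⊆ J ∧ J ⊆ A ∧ M.Indep J ∧ J.card = M.r A := by
  obtain hcard | hlt := (hI.card_le_r hIA hA).eq_or_lt
  · exact ⟨I, Subset.rfl, hIA, hI, hcard⟩
  obtain ⟨x, hx, hxI⟩ := hI.exists_insert_of_card_lt_r hIA hA hlt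
  have hxIA : insert x I ⊆ A := insert_subset (mem_sdiff.mp hx).1 hIA
  have : A.card - (insert x I).card < A.card - I.card := by
    have := card_le_card hxIA
    rw [card_insert_of_notMem (mem_sdiff.mp hx).2] at this ⊢
    omega
  obtain ⟨J, hxJ, hJ⟩ := hxI.exists_superset_card_eq_r hxIA hA
  exact ⟨J, (subset_insert x I).trans hxJ, hJ⟩
termination_by A.card - I.card

theorem Indep.exists_base_superset (hI : M.Indep I) : ∃ B, I ⊆ B ∧ M.Base B := by
  obtain ⟨B, hIB, -, hB, hBcard⟩ := hI.exists_superset_card_eq_r hI.1 Subset.rfl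
  refine ⟨B, hIB, hB, fun A hA hBA => ?_⟩
  exact (eq_of_subset_of_card_le hBA (hBcard ▸ hA.card_le_r hA.1 Subset.rfl)).symm

theorem card_inter_add_card_inter (I F L : Finset α) :
    (I ∩ F).card + (I ∩ L).card = (I ∩ (F ∪ L)).card + (I ∩ (F ∩ L)).card := by
  rw [inter_union_distrib_left, inter_inter_distrib_left, card_union_add_card_inter]

theorem Indep.card_inter_add_card_inter_le (hI : M.Indep I) (hF : F ⊆ M.E) (hL : L ⊆ M.E) :
    (I ∩ F).card + (I ∩ L).card ≤ M.r (F ∪ L) + M.r (F ∩ L) := by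
  rw [card_inter_add_card_inter]
  exact add_le_add (hI.card_inter_le_r (union_subset hF hL))
    (hI.card_inter_le_r (inter_subset_left.trans hF))

-- Extend a basis of `F ∩ L` to one of `F`, then to one of `F ∪ L`; modularity makes the
-- latter meet `L` in `r L` elements.
theorem exists_indep_r_le_card_inter_of_modular (hF : F ⊆ M.E) (hL : L ⊆ M.E)
    (hmod : M.r (F ∪ L) + M.r (F ∩ L) = M.r F + M.r L) :
    ∃ J, M.Indep J ∧ M.r F ≤ (J ∩ F).card ∧ M.r L ≤ (J ∩ L).card := by
  have hFL : F ∪ L ⊆ M.E := union_subset hF hL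
  obtain ⟨I, -, hIFL, hI, hIcard⟩ :=
    M.indep_empty.exists_superset_card_eq_r (empty_subset _) (inter_subset_left.trans hF)
  obtain ⟨JF, hIJF, hJFF, hJF, hJFcard⟩ :=
    hI.exists_superset_card_eq_r (hIFL.trans inter_subset_left) hF
  obtain ⟨J, hJFJ, hJFL, hJ, hJcard⟩ :=
    hJF.exists_superset_card_eq_r (hJFF.trans subset_union_left) hFL
  have hF_le : M.r F ≤ (J ∩ F).card := hJFcard ▸ card_le_card (subset_inter hJFJ hJFF)
  have hFiL_le : M.r (F ∩ L) ≤ (J ∩ (F ∩ L)).card :=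
    hIcard ▸ card_le_card (subset_inter (hIJF.trans hJFJ) hIFL)
  have hJ_FL : (J ∩ (F ∪ L)).card = M.r (F ∪ L) := by rw [inter_eq_left.mpr hJFL, hJcard]
  have hcard := card_inter_add_card_inter J F L
  have hJF_le := hJ.card_inter_le_r hF
  exact ⟨J, hJ, hF_le, by omega⟩

theorem Indep.card_inter_eq_r_of_subset (hB : M.Indep B) (hJB : J ⊆ B) (hX : X ⊆ M.E)
    (hJX : M.r X ≤ (J ∩ X).card) : (B ∩ X).card = M.r X :=
  le_antisymm (hB.card_inter_le_r hX)
    (hJX.trans (card_le_card (inter_subset_inter_right hJB)))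

end FinMatroid

/-- There is a base `B` with `|B ∩ F| = r F` and `|B ∩ L| = r L` iff
`{F, L}` is a modular pair. -/
theorem statement2 {α : Type*} [DecidableEq α] (M : FinMatroid α)
    (F L : Finset α) (hF : F ⊆ M.E) (hL : L ⊆ M.E) :
    (∃ B : Finset α, M.Base B ∧ (B ∩ F).card = M.r F ∧ (B ∩ L).card = M.r L) ↔
      M.r (F ∪ L) + M.r (F ∩ L) = M.r F + M.r L := by
  constructor
  · rintro ⟨B, hB, hBF, hBL⟩
    have hle := hB.1.card_inter_add_card_inter_le hF hL
    have hsub := M.r_submod hF hL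
    omega
  · intro hmod
    obtain ⟨J, hJ, hJF, hJL⟩ := FinMatroid.exists_indep_r_le_card_inter_of_modular hF hL hmod
    obtain ⟨B, hJB, hB⟩ := hJ.exists_base_superset
    exact ⟨B, hB, hB.1.card_inter_eq_r_of_subset hJB hF hJF,
      hB.1.card_inter_eq_r_of_subset hJB hL hJL⟩
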